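/- arXiv:2401.09439 — 3 statements merged into one kernel-verified Lean document; each statement's English description precedes it below -/
import Mathlib

section
/- Let n be a positive integer, let B be a symmetric real n×n matrix, and let f ∈ {0,1}ⁿ with Σᵢ fᵢ = m. Then the minimum of (f fᵀ X B) • X over all n×n permutation matrices X equals the minimum of xᵀ B x over all x ∈ {0,1}ⁿ with Σᵢ xᵢ = m. In other words, the QAP with flow matrix A = f fᵀ is equivalent to the binary quadratic optimization problem (BQOP) min{ xᵀBx : x ∈ {0,1}ⁿ, Σᵢ xᵢ = m } with a single cardinality constraint. -/
open Matrix BigOperators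

/-- A permutation matrix: a 0-1 matrix with exactly one 1 in each row and each column. -/
def IsPermMatrix {n : ℕ} (X : Matrix (Fin n) (Fin n) ℝ) : Prop :=
  (∀ i j, X i j = 0 ∨ X i j = 1) ∧ (∀ i, ∑ j, X i j = 1) ∧ (∀ j, ∑ i, X i j = 1)

lemma key3 (n : ℕ) (B X : Matrix (Fin n) (Fin n) ℝ) (f y : Fin n → ℝ)
    (hy : ∀ j, y j = ∑ i, f i * X i j) :
    ∑ i, ∑ j, (Matrix.vecMulVec f f * X * B) i j * X i j = y ⬝ᵥ (B *ᵥ y) := by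
  have hM : ∀ i j, (Matrix.vecMulVec f f * X * B) i j = f i * ∑ k, y k * B k j := by
    intro i j
    simp only [Matrix.mul_apply, Matrix.vecMulVec_apply, Finset.sum_mul, Finset.mul_sum, hy]
    exact Finset.sum_congr rfl fun k _ => Finset.sum_congr rfl fun l _ => by ring
  calc ∑ i, ∑ j, (Matrix.vecMulVec f f * X * B) i j * X i j
      = ∑ j, ∑ i, (f i * ∑ k, y k * B k j) * X i j := by
        rw [Finset.sum_comm]
        exact Finset.sum_congr rfl fun j _ => Finset.sum_congr rfl fun i _ => by rw [hM]
    _ = ∑ j, (∑ k, y k * B k j) * y j := by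
        refine Finset.sum_congr rfl fun j _ => ?_
        rw [hy, Finset.mul_sum]
        exact Finset.sum_congr rfl fun i _ => by ring
    _ = y ⬝ᵥ (B *ᵥ y) := by
        simp only [dotProduct, Matrix.mulVec, Finset.sum_mul, Finset.mul_sum]
        rw [Finset.sum_comm]
        exact Finset.sum_congr rfl fun j _ => Finset.sum_congr rfl fun k _ => by ring

lemma sum01 (n : ℕ) (g : Fin n → ℝ) (hg : ∀ i, g i = 0 ∨ g i = 1) :
    ∑ i, g i = (Finset.univ.filter (fun i => g i = 1)).card := by
  rw [Finset.card_filter]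
  push_cast
  refine Finset.sum_congr rfl fun i _ => ?_
  rcases hg i with h | h <;> simp [h]

/-- The QAP with flow matrix `A = f fᵀ` (`f ∈ {0,1}ⁿ`, `∑ fᵢ = m`) is equivalent to
the BQOP `min { xᵀBx : x ∈ {0,1}ⁿ, ∑ xᵢ = m }` with a single cardinality constraint. -/
theorem stmt3 (n : ℕ) (hn : 0 < n)
    (B : Matrix (Fin n) (Fin n) ℝ) (hB : B.IsSymm)
    (f : Fin n → ℝ) (hf : ∀ i, f i = 0 ∨ f i = 1)
    (m : ℝ) (hm : ∑ i, f i = m) :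
    sInf {v : ℝ | ∃ X : Matrix (Fin n) (Fin n) ℝ, IsPermMatrix X ∧
        v = ∑ i, ∑ j, (Matrix.vecMulVec f f * X * B) i j * X i j}
      = sInf {v : ℝ | ∃ x : Fin n → ℝ, (∀ i, x i = 0 ∨ x i = 1) ∧ ∑ i, x i = m ∧
          v = x ⬝ᵥ (B *ᵥ x)} := by
  congr 1
  ext v
  constructor
  · rintro ⟨X, ⟨hX01, hXr, hXc⟩, rfl⟩
    refine ⟨fun j => ∑ i, f i * X i j, ?_, ?_, key3 n B X f _ fun j => rfl⟩
    · intro j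
      show (∑ i, f i * X i j) = 0 ∨ (∑ i, f i * X i j) = 1
      -- column j has a unique 1
      obtain ⟨i0, hi0⟩ : ∃ i0, X i0 j = 1 := by
        by_contra h
        push_neg at h
        have : ∀ i, X i j = 0 := fun i => (hX01 i j).resolve_right (h i)
        have hz := hXc j
        rw [Finset.sum_eq_zero (fun i _ => this i)] at hz
        exact one_ne_zero hz.symm
      have hrest : ∀ i ∈ Finset.univ.erase i0, X i j = 0 := by
        have hsum : X i0 j + ∑ i ∈ Finset.univ.erase i0, X i j = 1 :=
          (Finset.add_sum_erase Finset.univ (fun i => X i j) (Finset.mem_univ i0)).trans (hXc j)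
        rw [hi0] at hsum
        have h0 : ∑ i ∈ Finset.univ.erase i0, X i j = 0 := by linarith
        intro i hi
        refine (Finset.sum_eq_zero_iff_of_nonneg ?_).1 h0 i hi
        intro k _
        rcases hX01 k j with h | h <;> simp [h]
      have : ∑ i, f i * X i j = f i0 := by
        rw [Finset.sum_eq_single i0]
        · rw [hi0, mul_one]
        · intro i _ hi
          rw [hrest i (Finset.mem_erase.2 ⟨hi, Finset.mem_univ i⟩), mul_zero]
        · exact fun h => absurd (Finset.mem_univ i0) h
      rw [this]; exact hf i0
    · rw [Finset.sum_comm]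
      calc ∑ i, ∑ j, f i * X i j = ∑ i, f i * ∑ j, X i j := by
            exact Finset.sum_congr rfl fun i _ => (Finset.mul_sum _ _ _).symm
        _ = ∑ i, f i := by simp [hXr]
        _ = m := hm
  · rintro ⟨x, hx01, hxm, rfl⟩
    classical
    have hcard : (Finset.univ.filter (fun i => f i = 1)).card
        = (Finset.univ.filter (fun i => x i = 1)).card := by
      have h1 := sum01 n f hf
      have h2 := sum01 n x hx01
      rw [hm] at h1; rw [hxm] at h2
      exact_mod_cast h1.symm.trans h2
    have hcard' : Fintype.card {i // f i = 1} = Fintype.card {i // x i = 1} := by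
      simp only [Fintype.card_subtype]
      exact_mod_cast hcard
    have e : {i // f i = 1} ≃ {i // x i = 1} := Fintype.equivOfCardEq hcard'
    have e' : {i // ¬ f i = 1} ≃ {i // ¬ x i = 1} := by
      refine Fintype.equivOfCardEq ?_
      rw [Fintype.card_subtype_compl, Fintype.card_subtype_compl, hcard']
    set σ : Equiv.Perm (Fin n) := Equiv.subtypeCongr e e' with hσdef
    have hσ : ∀ i, f i = 1 ↔ x (σ i) = 1 := by
      intro i
      by_cases h : f i = 1
      · have : σ i = (e ⟨i, h⟩ : {i // x i = 1}) := by
          simp [hσdef, Equiv.subtypeCongr, h]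
        rw [this]
        exact ⟨fun _ => (e ⟨i, h⟩).2, fun _ => h⟩
      · have : σ i = (e' ⟨i, h⟩ : {i // ¬ x i = 1}) := by
          simp [hσdef, Equiv.subtypeCongr, h]
        rw [this]
        exact ⟨fun hh => absurd hh h, fun hh => absurd hh (e' ⟨i, h⟩).2⟩
    have hfx : ∀ i, f i = x (σ i) := by
      intro i
      rcases hf i with h | h
      · rcases hx01 (σ i) with h' | h'
        · rw [h, h']
        · exact absurd ((hσ i).2 h') (by rw [h]; norm_num)
      · rw [h, (hσ i).1 h]
    set X : Matrix (Fin n) (Fin n) ℝ := fun i j => if σ i = j then 1 else 0 with hXdef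
    have hy : ∀ j, x j = ∑ i, f i * X i j := by
      intro j
      have : ∀ i, f i * X i j = if i = σ.symm j then f i else 0 := by
        intro i
        simp only [hXdef, Equiv.apply_eq_iff_eq_symm_apply, mul_ite, mul_one, mul_zero]
      simp only [this, Finset.sum_ite_eq' Finset.univ (σ.symm j) f, Finset.mem_univ, if_true]
      rw [hfx (σ.symm j), Equiv.apply_symm_apply]
    refine ⟨X, ⟨?_, ?_, ?_⟩, ?_⟩
    · intro i j; simp only [hXdef]; split <;> simp
    · intro i; simp [hXdef, Finset.sum_ite_eq]
    · intro j
      simp only [hXdef, Equiv.apply_eq_iff_eq_symm_apply]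
      simp [Finset.sum_ite_eq']
    · exact (key3 n B X f x hy).symm
end

section
/- Let n be a positive integer, let B be a symmetric real n×n matrix, and let σ be a permutation of N = {1,…,n}. Then xσᵀ B xσ = xᵀ B x holds for every x ∈ {0,1}ⁿ if and only if B_{σ(i)σ(j)} = B_{ij} for all i, j ∈ N. -/
open Matrix BigOperators

lemma quad_expand {n : ℕ} (B : Matrix (Fin n) (Fin n) ℝ) (y : Fin n → ℝ) :
    y ⬝ᵥ (B *ᵥ y) = ∑ i, ∑ j, y i * B i j * y j := by
  simp [dotProduct, mulVec, Finset.mul_sum, mul_assoc]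

lemma quad_single {n : ℕ} (B : Matrix (Fin n) (Fin n) ℝ) (a : Fin n) :
    (fun k => if k = a then (1:ℝ) else 0) ⬝ᵥ (B *ᵥ (fun k => if k = a then (1:ℝ) else 0))
      = B a a := by
  rw [quad_expand]
  simp [ite_mul, mul_ite, Finset.sum_ite_eq']

lemma quad_pair {n : ℕ} (B : Matrix (Fin n) (Fin n) ℝ) (a b : Fin n) (hab : a ≠ b) :
    (fun k => if k = a ∨ k = b then (1:ℝ) else 0) ⬝ᵥ
      (B *ᵥ (fun k => if k = a ∨ k = b then (1:ℝ) else 0))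
      = B a a + B a b + B b a + B b b := by
  rw [quad_expand]
  have key : ∀ i, ∑ j, (if i = a ∨ i = b then (1:ℝ) else 0) * B i j *
      (if j = a ∨ j = b then (1:ℝ) else 0)
      = (if i = a ∨ i = b then (1:ℝ) else 0) * (B i a + B i b) := by
    intro i
    by_cases h : i = a ∨ i = b
    · simp only [h, if_true, one_mul]
      have hsplit : ∀ j : Fin n, B i j * (if j = a ∨ j = b then (1:ℝ) else 0)
          = (if j = a then B i j else 0) + (if j = b then B i j else 0) := by
        intro j
        by_cases hja : j = a <;> by_cases hjb : j = b <;>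
          simp_all [hab]
      simp only [hsplit]
      rw [Finset.sum_add_distrib]
      simp [Finset.sum_ite_eq']
    · simp [h]
  simp only [key]
  have hsplit2 : ∀ i : Fin n, (if i = a ∨ i = b then (1:ℝ) else 0) * (B i a + B i b)
      = (if i = a then B i a + B i b else 0) + (if i = b then B i a + B i b else 0) := by
    intro i
    by_cases hia : i = a <;> by_cases hib : i = b <;>
      simp_all [hab]
  simp only [hsplit2]
  rw [Finset.sum_add_distrib]
  simp [Finset.sum_ite_eq']
  ring

/-- For a symmetric matrix `B` and a permutation `σ`, `xσᵀ B xσ = xᵀ B x` holds for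
every binary vector `x` iff `B (σ i) (σ j) = B i j` for all `i, j`.
Here `(xσ)ᵢ = x (σ i)`, i.e. `xσ = x ∘ σ`. -/
theorem stmt4 (n : ℕ) (hn : 0 < n)
    (B : Matrix (Fin n) (Fin n) ℝ) (hB : B.IsSymm) (σ : Equiv.Perm (Fin n)) :
    (∀ x : Fin n → ℝ, (∀ i, x i = 0 ∨ x i = 1) →
        (x ∘ ⇑σ) ⬝ᵥ (B *ᵥ (x ∘ ⇑σ)) = x ⬝ᵥ (B *ᵥ x))
      ↔ ∀ i j, B (σ i) (σ j) = B i j := by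
  constructor
  · intro h i j
    -- diagonal case first
    have hdiag : ∀ a : Fin n, B (σ a) (σ a) = B a a := by
      intro a
      have := h (fun k => if k = σ a then (1:ℝ) else 0) (by intro k; by_cases hk : k = σ a <;> simp [hk])
      have hcomp : ((fun k => if k = σ a then (1:ℝ) else 0) ∘ ⇑σ)
          = fun k => if k = a then (1:ℝ) else 0 := by
        funext k
        simp [Function.comp, Equiv.apply_eq_iff_eq]
      rw [hcomp, quad_single, quad_single] at this
      linarith
    by_cases hij : i = j
    · subst hij; exact hdiag i
    · have hσij : σ i ≠ σ j := fun hc => hij (σ.injective hc)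
      have := h (fun k => if k = σ i ∨ k = σ j then (1:ℝ) else 0)
        (by intro k; by_cases hk : k = σ i ∨ k = σ j <;> simp [hk])
      have hcomp : ((fun k => if k = σ i ∨ k = σ j then (1:ℝ) else 0) ∘ ⇑σ)
          = fun k => if k = i ∨ k = j then (1:ℝ) else 0 := by
        funext k
        simp [Function.comp, Equiv.apply_eq_iff_eq]
      rw [hcomp, quad_pair _ _ _ hij, quad_pair _ _ _ hσij] at this
      have hsymm1 : B j i = B i j := by
        have := congrFun (congrFun hB.eq i) j
        simpa [Matrix.transpose_apply] using this
      have hsymm2 : B (σ j) (σ i) = B (σ i) (σ j) := by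
        have := congrFun (congrFun hB.eq (σ i)) (σ j)
        simpa [Matrix.transpose_apply] using this
      have h1 := hdiag i
      have h2 := hdiag j
      linarith
  · intro h x _
    rw [quad_expand, quad_expand]
    set F : Fin n → Fin n → ℝ := fun a b => x a * B a b * x b with hF
    have step1 : ∀ i j : Fin n, x (σ i) * B i j * x (σ j) = F (σ i) (σ j) := by
      intro i j; simp [hF, ← h i j]
    simp only [Function.comp_apply, step1]
    have step2 : ∀ i : Fin n, ∑ j, F i (σ j) = ∑ j, F i j := fun i => Equiv.sum_comp σ (F i)
    simp only [step2]
    exact Equiv.sum_comp σ (fun i => ∑ j, F i j)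
end

section
/- Let n be a positive integer, B a symmetric real n×n matrix, m an integer, and let (I₀,I₁) and (I₀′,I₁′) be two pairs of disjoint subsets of N = {1,…,n} with F = N \ (I₀ ∪ I₁) and F′ = N \ (I₀′ ∪ I₁′). Suppose the two subproblems BQOP(I₀,I₁) and BQOP(I₀′,I₁′) are isomorphic, i.e., |I₀| = |I₀′|, |I₁| = |I₁′|, Σ_{j∈I₁} Σ_{k∈I₁} B_{jk} = Σ_{j∈I₁′} Σ_{k∈I₁′} B_{jk}, and B(I₀′,I₁′) = Pᵀ B(I₀,I₁) P for some permutation matrix P (identifying F and F′ via a bijection). Then ζ(I₀,I₁) = ζ(I₀′,I₁′), i.e., the two subproblems share a common optimal value. -/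
open Matrix BigOperators

/-- The optimal value (in the extended reals, `+∞` if infeasible) of the subproblem
`BQOP(I₀,I₁) : min { xᵀBx : x ∈ {0,1}ⁿ, ∑ xᵢ = m, xᵢ = 0 (i ∈ I₀), xⱼ = 1 (j ∈ I₁) }`. -/
noncomputable def zetaSub (n : ℕ) (B : Matrix (Fin n) (Fin n) ℝ) (m : ℤ)
    (I₀ I₁ : Finset (Fin n)) : EReal :=
  sInf {v : EReal | ∃ x : Fin n → ℝ, (∀ i, x i = 0 ∨ x i = 1) ∧ ∑ i, x i = (m : ℝ) ∧
    (∀ i ∈ I₀, x i = 0) ∧ (∀ j ∈ I₁, x j = 1) ∧ v = ((x ⬝ᵥ (B *ᵥ x) : ℝ) : EReal)}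

/-- The entries of the reduced matrix `B(I₀,I₁)`: off-diagonal entries `B i j` and
diagonal entries `B i i + 2 ∑_{k ∈ I₁} B k i`. -/
noncomputable def Bsub (n : ℕ) (B : Matrix (Fin n) (Fin n) ℝ) (I₁ : Finset (Fin n))
    (i j : Fin n) : ℝ :=
  if i = j then B i i + 2 * ∑ k ∈ I₁, B k i else B i j

lemma split_sum {n : ℕ} (I₀ I₁ : Finset (Fin n)) (hdis : Disjoint I₀ I₁) (g : Fin n → ℝ) :
    ∑ i, g i = ∑ i ∈ I₀, g i + ∑ i ∈ I₁, g i + ∑ i ∈ (I₀ ∪ I₁)ᶜ, g i := by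
  rw [← Finset.sum_add_sum_compl (I₀ ∪ I₁) g, Finset.sum_union hdis]

lemma quad_split (n : ℕ) (B : Matrix (Fin n) (Fin n) ℝ) (hB : B.IsSymm)
    (I₀ I₁ : Finset (Fin n)) (hdis : Disjoint I₀ I₁)
    (x : Fin n → ℝ) (h01 : ∀ i, x i = 0 ∨ x i = 1)
    (h0 : ∀ i ∈ I₀, x i = 0) (h1 : ∀ j ∈ I₁, x j = 1) :
    x ⬝ᵥ B *ᵥ x = (∑ j ∈ I₁, ∑ k ∈ I₁, B j k)
      + ∑ i ∈ (I₀ ∪ I₁)ᶜ, ∑ j ∈ (I₀ ∪ I₁)ᶜ, Bsub n B I₁ i j * x i * x j := by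
  have hxx : ∀ i, x i * x i = x i := by
    intro i; rcases h01 i with h | h <;> rw [h] <;> ring
  have hsym : ∀ i j, B i j = B j i := fun i j => (congrFun (congrFun hB.symm i) j : _)
  have key : x ⬝ᵥ B *ᵥ x = ∑ i, ∑ j, x i * (B i j * x j) := by
    simp [dotProduct, mulVec, Finset.mul_sum]
  rw [key, split_sum I₀ I₁ hdis]
  have z0 : ∑ i ∈ I₀, ∑ j, x i * (B i j * x j) = 0 := by
    apply Finset.sum_eq_zero; intro i hi; simp [h0 i hi]
  rw [z0]
  have inner_split : ∀ i, ∑ j, x i * (B i j * x j)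
      = x i * ∑ j ∈ I₁, B i j + ∑ j ∈ (I₀ ∪ I₁)ᶜ, x i * (B i j * x j) := by
    intro i
    rw [split_sum I₀ I₁ hdis (fun j => x i * (B i j * x j))]
    have e0 : ∑ j ∈ I₀, x i * (B i j * x j) = 0 := by
      apply Finset.sum_eq_zero; intro j hj; simp [h0 j hj]
    have e1 : ∑ j ∈ I₁, x i * (B i j * x j) = x i * ∑ j ∈ I₁, B i j := by
      rw [Finset.mul_sum]
      apply Finset.sum_congr rfl; intro j hj; rw [h1 j hj]; ring
    rw [e0, e1]; ring
  simp only [inner_split]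
  set F := (I₀ ∪ I₁)ᶜ with hF
  set C := ∑ j ∈ I₁, ∑ k ∈ I₁, B j k with hC
  set S := ∑ j ∈ F, (∑ k ∈ I₁, B k j) * x j with hS
  set Q := ∑ i ∈ F, ∑ j ∈ F, B i j * x i * x j with hQ
  have s1 : ∑ i ∈ I₁, (x i * ∑ j ∈ I₁, B i j + ∑ j ∈ F, x i * (B i j * x j)) = C + S := by
    rw [Finset.sum_add_distrib]
    congr 1
    · apply Finset.sum_congr rfl; intro i hi; rw [h1 i hi, one_mul]
    · rw [Finset.sum_comm]
      apply Finset.sum_congr rfl; intro j _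
      rw [Finset.sum_mul]
      apply Finset.sum_congr rfl; intro i hi; rw [h1 i hi]; ring
  rw [s1]
  have s2 : ∑ i ∈ F, (x i * ∑ j ∈ I₁, B i j + ∑ j ∈ F, x i * (B i j * x j)) = S + Q := by
    rw [Finset.sum_add_distrib]
    congr 1
    · apply Finset.sum_congr rfl; intro i _
      rw [Finset.mul_sum, Finset.sum_mul]
      apply Finset.sum_congr rfl; intro j _; rw [hsym i j]; ring
    · apply Finset.sum_congr rfl; intro i _
      apply Finset.sum_congr rfl; intro j _; ring
  rw [s2]
  have s3 : ∑ i ∈ F, ∑ j ∈ F, Bsub n B I₁ i j * x i * x j = Q + 2 * S := by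
    have hterm : ∀ i ∈ F, ∀ j ∈ F, Bsub n B I₁ i j * x i * x j
        = B i j * x i * x j + (if i = j then 2 * ∑ k ∈ I₁, B k i else 0) * x i * x j := by
      intro i _ j _; unfold Bsub; split_ifs with h <;> [subst h; skip] <;> ring
    calc ∑ i ∈ F, ∑ j ∈ F, Bsub n B I₁ i j * x i * x j
        = ∑ i ∈ F, ∑ j ∈ F, (B i j * x i * x j
            + (if i = j then 2 * ∑ k ∈ I₁, B k i else 0) * x i * x j) := by
          apply Finset.sum_congr rfl; intro i hi
          apply Finset.sum_congr rfl; intro j hj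
          exact hterm i hi j hj
      _ = Q + ∑ i ∈ F, ∑ j ∈ F, (if i = j then 2 * ∑ k ∈ I₁, B k i else 0) * x i * x j := by
          rw [← Finset.sum_add_distrib]
          apply Finset.sum_congr rfl; intro i _
          rw [← Finset.sum_add_distrib]
      _ = Q + 2 * S := by
          congr 1
          have hdg : ∀ i ∈ F, ∑ j ∈ F, (if i = j then 2 * ∑ k ∈ I₁, B k i else 0) * x i * x j
              = 2 * ((∑ k ∈ I₁, B k i) * x i) := by
            intro i hi
            rw [Finset.sum_eq_single i]
            · rw [if_pos rfl, mul_assoc, hxx i]; ring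
            · intro j _ hj; simp [Ne.symm hj]
            · intro h; exact absurd hi h
          rw [Finset.sum_congr rfl hdg, ← Finset.mul_sum, hS, Finset.mul_sum]
  rw [s3]
  ring

lemma zeta_le (n : ℕ) (B : Matrix (Fin n) (Fin n) ℝ) (hB : B.IsSymm) (m : ℤ)
    (I₀ I₁ I₀' I₁' : Finset (Fin n))
    (hdis : Disjoint I₀ I₁) (hdis' : Disjoint I₀' I₁')
    (hcard1 : I₁.card = I₁'.card)
    (hconst : ∑ j ∈ I₁, ∑ k ∈ I₁, B j k = ∑ j ∈ I₁', ∑ k ∈ I₁', B j k)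
    (e : {i : Fin n // i ∈ (I₀ ∪ I₁)ᶜ} ≃ {i : Fin n // i ∈ (I₀' ∪ I₁')ᶜ})
    (he : ∀ i j : {i : Fin n // i ∈ (I₀ ∪ I₁)ᶜ},
        Bsub n B I₁' (e i).1 (e j).1 = Bsub n B I₁ i.1 j.1) :
    zetaSub n B m I₀' I₁' ≤ zetaSub n B m I₀ I₁ := by
  apply sInf_le_sInf
  rintro v ⟨x, h01, hsum, h0, h1, hv⟩
  classical
  set x' : Fin n → ℝ := fun i =>
    if h : i ∈ (I₀' ∪ I₁')ᶜ then x (e.symm ⟨i, h⟩).1 else if i ∈ I₁' then 1 else 0 with hx'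
  have hx'F' : ∀ (i : Fin n) (h : i ∈ (I₀' ∪ I₁')ᶜ), x' i = x (e.symm ⟨i, h⟩).1 := by
    intro i h; simp only [hx', dif_pos h]
  have hmemF' : ∀ i : Fin n, i ∈ (I₀' ∪ I₁')ᶜ ↔ i ∉ I₀' ∧ i ∉ I₁' := by
    intro i; simp [Finset.mem_compl, Finset.mem_union, not_or]
  have h0' : ∀ i ∈ I₀', x' i = 0 := by
    intro i hi
    have hnF : i ∉ (I₀' ∪ I₁')ᶜ := fun h => ((hmemF' i).1 h).1 hi
    have hn1 : i ∉ I₁' := fun h => (Finset.disjoint_left.1 hdis') hi h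
    simp only [hx', dif_neg hnF, if_neg hn1]
  have h1' : ∀ j ∈ I₁', x' j = 1 := by
    intro j hj
    have hnF : j ∉ (I₀' ∪ I₁')ᶜ := fun h => ((hmemF' j).1 h).2 hj
    simp only [hx', dif_neg hnF, if_pos hj]
  have h01' : ∀ i, x' i = 0 ∨ x' i = 1 := by
    intro i
    by_cases h : i ∈ (I₀' ∪ I₁')ᶜ
    · rw [hx'F' i h]; exact h01 _
    · simp only [hx', dif_neg h]; split_ifs <;> simp
  have hsum_F' : ∀ f : Fin n → ℝ,
      ∑ i ∈ (I₀' ∪ I₁')ᶜ, f i = ∑ i : {i : Fin n // i ∈ (I₀ ∪ I₁)ᶜ}, f (e i).1 := by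
    intro f
    rw [← Finset.sum_coe_sort ((I₀' ∪ I₁')ᶜ) f]
    exact (Equiv.sum_comp e (fun i : {i : Fin n // i ∈ (I₀' ∪ I₁')ᶜ} => f i.1)).symm
  have hx'e : ∀ i : {i : Fin n // i ∈ (I₀ ∪ I₁)ᶜ}, x' (e i).1 = x i.1 := by
    intro i
    rw [hx'F' (e i).1 (e i).2]
    have h2 : (⟨(e i).1, (e i).2⟩ : {j : Fin n // j ∈ (I₀' ∪ I₁')ᶜ}) = e i := rfl
    rw [h2, Equiv.symm_apply_apply]
  have hxsum : (m : ℝ) = (I₁.card : ℝ) + ∑ i ∈ (I₀ ∪ I₁)ᶜ, x i := by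
    rw [← hsum, split_sum I₀ I₁ hdis x, Finset.sum_eq_zero h0,
      Finset.sum_congr rfl h1, Finset.sum_const, nsmul_eq_mul, mul_one, zero_add]
  have hsum' : ∑ i, x' i = (m : ℝ) := by
    rw [split_sum I₀' I₁' hdis' x', Finset.sum_eq_zero h0',
      Finset.sum_congr rfl h1', Finset.sum_const, nsmul_eq_mul, mul_one, zero_add,
      hsum_F' x']
    simp only [hx'e]
    rw [Finset.sum_coe_sort ((I₀ ∪ I₁)ᶜ) x, hxsum, hcard1]
  have hobj : x' ⬝ᵥ B *ᵥ x' = x ⬝ᵥ B *ᵥ x := by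
    rw [quad_split n B hB I₀ I₁ hdis x h01 h0 h1,
        quad_split n B hB I₀' I₁' hdis' x' h01' h0' h1', hconst]
    congr 1
    calc ∑ i ∈ (I₀' ∪ I₁')ᶜ, ∑ j ∈ (I₀' ∪ I₁')ᶜ, Bsub n B I₁' i j * x' i * x' j
        = ∑ i : {i : Fin n // i ∈ (I₀ ∪ I₁)ᶜ}, ∑ j ∈ (I₀' ∪ I₁')ᶜ,
            Bsub n B I₁' (e i).1 j * x' (e i).1 * x' j := hsum_F' _
      _ = ∑ i : {i : Fin n // i ∈ (I₀ ∪ I₁)ᶜ}, ∑ j : {i : Fin n // i ∈ (I₀ ∪ I₁)ᶜ},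
            Bsub n B I₁' (e i).1 (e j).1 * x' (e i).1 * x' (e j).1 := by
          apply Finset.sum_congr rfl; intro i _
          exact hsum_F' _
      _ = ∑ i : {i : Fin n // i ∈ (I₀ ∪ I₁)ᶜ}, ∑ j : {i : Fin n // i ∈ (I₀ ∪ I₁)ᶜ},
            Bsub n B I₁ i.1 j.1 * x i.1 * x j.1 := by
          apply Finset.sum_congr rfl; intro i _
          apply Finset.sum_congr rfl; intro j _
          rw [he i j, hx'e i, hx'e j]
      _ = ∑ i : {i : Fin n // i ∈ (I₀ ∪ I₁)ᶜ}, ∑ j ∈ (I₀ ∪ I₁)ᶜ,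
            Bsub n B I₁ i.1 j * x i.1 * x j := by
          apply Finset.sum_congr rfl; intro i _
          exact Finset.sum_coe_sort ((I₀ ∪ I₁)ᶜ)
            (fun a => Bsub n B I₁ i.1 a * x i.1 * x a)
      _ = ∑ i ∈ (I₀ ∪ I₁)ᶜ, ∑ j ∈ (I₀ ∪ I₁)ᶜ, Bsub n B I₁ i j * x i * x j :=
          Finset.sum_coe_sort ((I₀ ∪ I₁)ᶜ)
            (fun a => ∑ j ∈ (I₀ ∪ I₁)ᶜ, Bsub n B I₁ a j * x a * x j)
  exact ⟨x', h01', hsum', h0', h1', by rw [hobj]; exact hv⟩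

/-- Isomorphism pruning: if two subproblems `BQOP(I₀,I₁)` and `BQOP(I₀',I₁')` are
isomorphic, i.e. `|I₀| = |I₀'|`, `|I₁| = |I₁'|`, `∑_{j,k∈I₁} B j k = ∑_{j,k∈I₁'} B j k`,
and `B(I₀',I₁') = Pᵀ B(I₀,I₁) P` for some permutation matrix `P` (equivalently, a
bijection `e` between `F = N \ (I₀ ∪ I₁)` and `F' = N \ (I₀' ∪ I₁')` matching the
entries), then they share a common optimal value. -/
theorem stmt10 (n : ℕ) (hn : 0 < n)
    (B : Matrix (Fin n) (Fin n) ℝ) (hB : B.IsSymm) (m : ℤ)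
    (I₀ I₁ I₀' I₁' : Finset (Fin n))
    (hdis : Disjoint I₀ I₁) (hdis' : Disjoint I₀' I₁')
    (hcard0 : I₀.card = I₀'.card) (hcard1 : I₁.card = I₁'.card)
    (hconst : ∑ j ∈ I₁, ∑ k ∈ I₁, B j k = ∑ j ∈ I₁', ∑ k ∈ I₁', B j k)
    (hperm : ∃ e : {i : Fin n // i ∈ (I₀ ∪ I₁)ᶜ} ≃ {i : Fin n // i ∈ (I₀' ∪ I₁')ᶜ},
      ∀ i j : {i : Fin n // i ∈ (I₀ ∪ I₁)ᶜ},
        Bsub n B I₁' (e i).1 (e j).1 = Bsub n B I₁ i.1 j.1) :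
    zetaSub n B m I₀ I₁ = zetaSub n B m I₀' I₁' := by

  obtain ⟨e, he⟩ := hperm
  apply le_antisymm
  · refine zeta_le n B hB m I₀' I₁' I₀ I₁ hdis' hdis hcard1.symm hconst.symm e.symm ?_
    intro i j
    have h := he (e.symm i) (e.symm j)
    rw [Equiv.apply_symm_apply, Equiv.apply_symm_apply] at h
    exact h.symm
  · exact zeta_le n B hB m I₀ I₁ I₀' I₁' hdis hdis' hcard1 hconst e he
end
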